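/- Let X be a space of cardinality less than 𝔡 and let 𝒦 be a family of subsets of X closed under finite unions. If X is star-σ𝒦 (for every open cover U there is a set K which is a countable union of members of 𝒦 with St(K,U) = X), then X satisfies SS*_𝒦(O,O): for each sequence (Uₙ) of open covers there are Kₙ ∈ 𝒦 with {St(Kₙ,Uₙ) : n ∈ ω} an open cover of X. -/

import Mathlib

open Set Filter

variable {X : Type u}

def star {X : Type u} (A : Set X) (U : Set (Set X)) : Set X :=
  ⋃₀ {u ∈ U | (u ∩ A).Nonempty}

def IsOpenCover {X : Type u} [TopologicalSpace X] (U : Set (Set X)) : Prop :=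
  (∀ u ∈ U, IsOpen u) ∧ ⋃₀ U = univ

noncomputable def domNum : Cardinal :=
  sInf {c | ∃ D : Set (ℕ → ℕ), Cardinal.mk D = c ∧
    ∀ f : ℕ → ℕ, ∃ g ∈ D, ∀ᶠ n in atTop, f n ≤ g n}

noncomputable def boundNum : Cardinal :=
  sInf {c | ∃ B : Set (ℕ → ℕ), Cardinal.mk B = c ∧
    ¬ ∃ g : ℕ → ℕ, ∀ f ∈ B, ∀ᶠ n in atTop, f n ≤ g n}

noncomputable def covMeager : Cardinal :=
  sInf {c | ∃ F : Set (ℕ → ℕ), Cardinal.mk F = c ∧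
    ¬ ∃ g : ℕ → ℕ, ∀ f ∈ F, {n | g n = f n}.Infinite}

def StronglyStarLindelof (X : Type u) [TopologicalSpace X] : Prop :=
  ∀ U : Set (Set X), IsOpenCover U →
    ∃ C : Set X, C.Countable ∧ star C U = univ

def AbsStronglyStarLindelof (X : Type u) [TopologicalSpace X] : Prop :=
  ∀ U : Set (Set X), IsOpenCover U → ∀ D : Set X, Dense D →
    ∃ C : Set X, C ⊆ D ∧ C.Countable ∧ star C U = univ

def StronglyStarMenger (X : Type u) [TopologicalSpace X] : Prop :=
  ∀ U : ℕ → Set (Set X), (∀ n, IsOpenCover (U n)) →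
    ∃ F : ℕ → Finset X, ⋃ n, star (↑(F n)) (U n) = univ

def AbsStronglyStarMenger (X : Type u) [TopologicalSpace X] : Prop :=
  ∀ U : ℕ → Set (Set X), (∀ n, IsOpenCover (U n)) → ∀ D : Set X, Dense D →
    ∃ F : ℕ → Finset X, (∀ n, ↑(F n) ⊆ D) ∧ ⋃ n, star (↑(F n)) (U n) = univ

def SelStronglyStarMenger (X : Type u) [TopologicalSpace X] : Prop :=
  ∀ U : ℕ → Set (Set X), (∀ n, IsOpenCover (U n)) →
    ∀ D : ℕ → Set X, (∀ n, Dense (D n)) →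
      ∃ F : ℕ → Finset X, (∀ n, ↑(F n) ⊆ D n) ∧ ⋃ n, star (↑(F n)) (U n) = univ

def StronglyStarHurewicz (X : Type u) [TopologicalSpace X] : Prop :=
  ∀ U : ℕ → Set (Set X), (∀ n, IsOpenCover (U n)) →
    ∃ F : ℕ → Finset X, ∀ x : X, ∀ᶠ n in atTop, x ∈ star (↑(F n)) (U n)

def SelStronglyStarHurewicz (X : Type u) [TopologicalSpace X] : Prop :=
  ∀ U : ℕ → Set (Set X), (∀ n, IsOpenCover (U n)) →
    ∀ D : ℕ → Set X, (∀ n, Dense (D n)) →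
      ∃ F : ℕ → Finset X, (∀ n, ↑(F n) ⊆ D n) ∧
        ∀ x : X, ∀ᶠ n in atTop, x ∈ star (↑(F n)) (U n)

def StronglyStarRothberger (X : Type u) [TopologicalSpace X] : Prop :=
  ∀ U : ℕ → Set (Set X), (∀ n, IsOpenCover (U n)) →
    ∃ x : ℕ → X, ⋃ n, star {x n} (U n) = univ

def SelStronglyStarRothberger (X : Type u) [TopologicalSpace X] : Prop :=
  ∀ U : ℕ → Set (Set X), (∀ n, IsOpenCover (U n)) →
    ∀ D : ℕ → Set X, (∀ n, Dense (D n)) →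
      ∃ d : ℕ → X, (∀ n, d n ∈ D n) ∧ ⋃ n, star {d n} (U n) = univ

def DiscreteIn {X : Type u} [TopologicalSpace X] (C : Set X) : Prop :=
  ∀ x ∈ C, ∃ O : Set X, IsOpen O ∧ O ∩ C = {x}

def CountableExtent (X : Type u) [TopologicalSpace X] : Prop :=
  ∀ C : Set X, IsClosed C → DiscreteIn C → C.Countable

def SelSScdOGamma (X : Type u) [TopologicalSpace X] : Prop :=
  ∀ U : ℕ → Set (Set X), (∀ n, IsOpenCover (U n)) →
    ∀ D : ℕ → Set X, (∀ n, Dense (D n)) →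
      ∃ C : ℕ → Set X, (∀ n, C n ⊆ D n ∧ IsClosed (C n) ∧ DiscreteIn (C n)) ∧
        ∀ x : X, ∀ᶠ n in atTop, x ∈ star (C n) (U n)

def SelSScdOO (X : Type u) [TopologicalSpace X] : Prop :=
  ∀ U : ℕ → Set (Set X), (∀ n, IsOpenCover (U n)) →
    ∀ D : ℕ → Set X, (∀ n, Dense (D n)) →
      ∃ C : ℕ → Set X, (∀ n, C n ⊆ D n ∧ IsClosed (C n) ∧ DiscreteIn (C n)) ∧
        ⋃ n, star (C n) (U n) = univ

def StarSigmaK (X : Type u) [TopologicalSpace X] (K : Set (Set X)) : Prop :=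
  ∀ U : Set (Set X), IsOpenCover U →
    ∃ E : ℕ → Set X, (∀ m, E m ∈ K) ∧ star (⋃ m, E m) U = univ

def AbsStarSigmaK (X : Type u) [TopologicalSpace X] (K : Set (Set X)) : Prop :=
  ∀ D : Set X, Dense D → ∀ U : Set (Set X), IsOpenCover U →
    ∃ E : ℕ → Set X, (∀ m, E m ∈ K ∧ E m ⊆ D) ∧ star (⋃ m, E m) U = univ

def AbsNbhdStarMenger (X : Type u) [TopologicalSpace X] : Prop :=
  ∀ U : ℕ → Set (Set X), (∀ n, IsOpenCover (U n)) → ∀ D : Set X, Dense D →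
    ∃ F : ℕ → Finset X, (∀ n, ↑(F n) ⊆ D) ∧
      ∀ O : ℕ → Set X, (∀ n, IsOpen (O n) ∧ ↑(F n) ⊆ O n) →
        ⋃ n, star (O n) (U n) = univ

def AbsNbhdStarHurewicz (X : Type u) [TopologicalSpace X] : Prop :=
  ∀ U : ℕ → Set (Set X), (∀ n, IsOpenCover (U n)) → ∀ D : Set X, Dense D →
    ∃ F : ℕ → Finset X, (∀ n, ↑(F n) ⊆ D) ∧
      ∀ O : ℕ → Set X, (∀ n, IsOpen (O n) ∧ ↑(F n) ⊆ O n) →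
        ∀ x : X, ∀ᶠ n in atTop, x ∈ star (O n) (U n)


/-!
For the `n`-th cover choose `Eₙₘ ∈ 𝒦` (`m ∈ ω`) whose union stars to all of `X`. The partial unions
`Aₙₘ = ⋃_{i ≤ m} Eₙᵢ` stay in `𝒦`, and their stars `St(Aₙₘ, Uₙ)` increase to `X`. Let `fₓ(n)` be an
index `m` with `x ∈ St(Aₙₘ, Uₙ)`. Fewer than `𝔡` functions `fₓ` do not dominate, so some `g`
satisfies `fₓ(n) < g(n)` for some `n`, for every `x`; then `Kₙ = Aₙ_{g(n)}` works.
-/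

theorem star_mono {A B : Set X} (h : A ⊆ B) (U : Set (Set X)) : star A U ⊆ star B U := by
  rintro x ⟨u, ⟨hu, y, hyu, hyA⟩, hxu⟩
  exact ⟨u, ⟨hu, y, hyu, h hyA⟩, hxu⟩

theorem star_iUnion {ι : Sort*} (s : ι → Set X) (U : Set (Set X)) :
    star (⋃ i, s i) U = ⋃ i, star (s i) U := by
  ext x
  simp only [_root_.star, mem_sUnion, mem_ofPred_eq, mem_iUnion, inter_iUnion, nonempty_iUnion]
  grind

theorem accumulate_mem {K : Set (Set X)} (hK : ∀ A ∈ K, ∀ B ∈ K, A ∪ B ∈ K) {s : ℕ → Set X}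
    (hs : ∀ n, s n ∈ K) (n : ℕ) : accumulate s n ∈ K := by
  induction n with
  | zero => simpa using hs 0
  | succ n ih => simpa using hK _ ih _ (hs (n + 1))

theorem exists_forall_exists_lt_of_mk_lt_domNum {ι : Type u}
    (hι : Cardinal.mk ι < Cardinal.lift.{u} domNum) (f : ι → ℕ → ℕ) :
    ∃ g : ℕ → ℕ, ∀ i, ∃ n, f i n < g n := by
  by_contra! hdom
  have : domNum ≤ Cardinal.mk (range f) := by
    refine csInf_le' ⟨range f, rfl, fun g => ?_⟩
    obtain ⟨i, hi⟩ := hdom g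
    exact ⟨f i, mem_range_self i, Eventually.of_forall hi⟩
  have := (Cardinal.lift_le.{u}.mpr this).trans Cardinal.mk_range_le_lift
  rw [Cardinal.lift_uzero] at this
  exact hι.not_ge this

theorem exists_iUnion_eq_univ_of_mk_lt_domNum (hX : Cardinal.mk X < Cardinal.lift.{u} domNum)
    {S : ℕ → ℕ → Set X} (hS : ∀ n, Monotone (S n)) (hcov : ∀ n, ⋃ m, S n m = univ) :
    ∃ g : ℕ → ℕ, ⋃ n, S n (g n) = univ := by
  have hmem (x : X) (n : ℕ) : ∃ m, x ∈ S n m := mem_iUnion.mp (hcov n ▸ mem_univ x)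
  choose f hf using hmem
  obtain ⟨g, hg⟩ := exists_forall_exists_lt_of_mk_lt_domNum hX f
  refine ⟨g, eq_univ_of_forall fun x => ?_⟩
  obtain ⟨n, hn⟩ := hg x
  exact mem_iUnion.mpr ⟨n, hS n hn.le (hf x n)⟩

theorem stmt3 {X : Type u} [TopologicalSpace X] (K : Set (Set X))
    (hK : ∀ A ∈ K, ∀ B ∈ K, A ∪ B ∈ K)
    (hcard : Cardinal.mk X < Cardinal.lift.{u} domNum) (hstar : StarSigmaK X K) :
    ∀ U : ℕ → Set (Set X), (∀ n, IsOpenCover (U n)) →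
      ∃ Ks : ℕ → Set X, (∀ n, Ks n ∈ K) ∧ ⋃ n, star (Ks n) (U n) = univ := by
  intro U hU
  choose E hEK hE using fun n => hstar (U n) (hU n)
  obtain ⟨g, hg⟩ := exists_iUnion_eq_univ_of_mk_lt_domNum hcard
    (S := fun n m => star (accumulate (E n) m) (U n))
    (fun n _ _ h => star_mono (monotone_accumulate h) (U n))
    (fun n => by rw [← star_iUnion, iUnion_accumulate, hE n])
  exact ⟨fun n => accumulate (E n) (g n), fun n => accumulate_mem hK (hEK n) (g n), hg⟩
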